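/- If t is a well-formed infinite partial evaluation tree, then for every natural number n there exists a node α in the domain of t with |α| = n whose judgement is incomplete (has result '?'). -/

import Mathlib

/-- Judgements over configurations `C` and extended results `Option R`
    (`none` stands for the special extra result such as `?`, `wrong`, or `∞`). -/
abbrev Judg (C R : Type) := C × Option R

/-- Lift a complete judgement to an extended judgement. -/
def liftJ {C R : Type} (j : C × R) : Judg C R := (j.1, some j.2)

/-- Bounded-premises condition. -/
def BP {C R : Type} (Rules : Set (List (C × R) × (C × R))) : Prop :=
  ∀ c : C, ∃ b : ℕ, ∀ js res, (js, (c, res)) ∈ Rules → js.length ≤ b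

/-- The extended rule set `Rules_?`: original rules (lifted), start axioms
    `c ⇒ ?`, and partial rules. -/
def RulesQ {C R : Type} (Rules : Set (List (C × R) × (C × R))) :
    Set (List (Judg C R) × Judg C R) :=
  { r | (∃ c : C, r = ([], (c, none)))
      ∨ (∃ (js : List (C × R)) (c : C) (res : R), (js, (c, res)) ∈ Rules ∧ r = (js.map liftJ, (c, some res)))
      ∨ (∃ (js : List (C × R)) (c : C) (res : R) (i : ℕ) (hi : i < js.length) (u : Option R),
          (js, (c, res)) ∈ Rules ∧
          r = ((js.take i).map liftJ ++ [((js[i]'hi).1, u)], (c, none))) }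

/-- Ordered trees labelled in `L`: partial functions from positions (lists of
    child indices) to labels, with nonempty, prefix-closed,
    sibling-downward-closed domain. -/
structure OTree (L : Type) where
  label : List ℕ → Option L
  root_isSome : (label []).isSome
  pref : ∀ α n, (label (α ++ [n])).isSome → (label α).isSome
  sib : ∀ α n k, (label (α ++ [n])).isSome → k ≤ n → (label (α ++ [k])).isSome

/-- A tree is an evaluation tree in a rule set: at every node, the ordered
    children labels together with the node label form a rule. -/
def IsTreeIn {L : Type} (Rules : Set (List L × L)) (t : OTree L) : Prop :=
  ∀ α l, t.label α = some l →
    ∃ ps : List L, (∀ i : ℕ, t.label (α ++ [i]) = ps[i]?) ∧ (ps, l) ∈ Rules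

/-- Partial evaluation trees: evaluation trees in `Rules_?`. -/
def IsPET {C R : Type} (Rules : Set (List (C × R) × (C × R)))
    (t : OTree (Judg C R)) : Prop :=
  IsTreeIn (RulesQ Rules) t

/-- The refinement relation `⊑` on trees labelled by possibly-incomplete
    judgements. -/
def TreeLE {C R : Type} (t t' : OTree (Judg C R)) : Prop :=
  (∀ α, (t.label α).isSome → (t'.label α).isSome) ∧
  ∀ α c u, t.label α = some (c, u) →
    (∃ (u' : Option R), t'.label α = some (c, u')) ∧
    (u.isSome → ∀ β, t.label (α ++ β) = t'.label (α ++ β))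

/-- Strict refinement `⊏`. -/
def TreeLT {C R : Type} (t t' : OTree (Judg C R)) : Prop :=
  TreeLE t t' ∧ t ≠ t'

/-- A tree is finite if its domain is finite. -/
def TreeFinite {L : Type} (t : OTree L) : Prop :=
  Set.Finite {α | (t.label α).isSome}

/-- Well-formedness: every subtree rooted at a complete node is finite. -/
def WellFormed {C R : Type} (t : OTree (Judg C R)) : Prop :=
  ∀ α c r, t.label α = some (c, some r) →
    Set.Finite {β | (t.label (α ++ β)).isSome}

/-- `t` is a least upper bound of the sequence `f` w.r.t. `⊑`. -/
def IsLubSeq {C R : Type} (f : ℕ → OTree (Judg C R)) (t : OTree (Judg C R)) : Prop :=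
  (∀ n, TreeLE (f n) t) ∧ ∀ t', (∀ n, TreeLE (f n) t') → TreeLE t t'

/-- Inductive derivability in a rule set with finite-list premises. -/
inductive IndDerives {J : Type} (Rules : Set (List J × J)) : J → Prop where
  | node (ps : List J) (j : J) : (ps, j) ∈ Rules →
      (∀ p ∈ ps, IndDerives Rules p) → IndDerives Rules j

/-- A set of judgements is consistent w.r.t. a rule set. -/
def ConsistentL {J : Type} (Rules : Set (List J × J)) (X : Set J) : Prop :=
  ∀ j ∈ X, ∃ (ps : List J), (ps, j) ∈ Rules ∧ ∀ p ∈ ps, p ∈ X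

/-- Coinductive derivability: membership in some consistent set. -/
def CoDerives {J : Type} (Rules : Set (List J × J)) (j : J) : Prop :=
  ∃ (X : Set J), ConsistentL Rules X ∧ j ∈ X

/-- Derivability in a generalised inference system (rules + corules):
    membership in a consistent set all of whose elements have a finite
    derivation using both rules and corules. -/
def GenDerives {J : Type} (rules corules : Set (List J × J)) (j : J) : Prop :=
  ∃ (X : Set J), ConsistentL rules X ∧ (∀ x ∈ X, IndDerives (rules ∪ corules) x) ∧ j ∈ X

/-!
König's lemma in disguise: every node of an evaluation tree has finitely many children, so a node
whose subtree is infinite has a child whose subtree is infinite. Starting from the root of the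
infinite tree this yields a node with infinite subtree at every depth, and well-formedness forbids
such a node from carrying a complete judgement.
-/

namespace OTree

variable {L : Type} (t : OTree L)

def subtreeDom (α : List ℕ) : Set (List ℕ) :=
  {β | (t.label (α ++ β)).isSome}

lemma isSome_of_isSome_append (α β : List ℕ) (h : (t.label (α ++ β)).isSome) :
    (t.label α).isSome := by
  induction β using List.reverseRecOn with
  | nil => simpa using h
  | append_singleton β n ih => exact ih (t.pref (α ++ β) n (by rwa [← List.append_assoc] at h))

lemma isSome_of_subtreeDom_infinite {α : List ℕ} (h : (t.subtreeDom α).Infinite) :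
    (t.label α).isSome :=
  let ⟨β, hβ⟩ := h.nonempty
  t.isSome_of_isSome_append α β hβ

lemma subtreeDom_subset_insert_biUnion (α : List ℕ) (k : ℕ)
    (hk : ∀ i, (t.label (α ++ [i])).isSome → i < k) :
    t.subtreeDom α ⊆ insert [] (⋃ i ∈ Set.Iio k, List.cons i '' t.subtreeDom (α ++ [i])) := by
  rintro (_ | ⟨i, β⟩) hβ
  · exact Set.mem_insert _ _
  · have hchild : (t.label (α ++ [i] ++ β)).isSome := by simpa [subtreeDom] using hβ
    exact Or.inr (Set.mem_biUnion (hk i (t.isSome_of_isSome_append _ β hchild)) ⟨β, hchild, rfl⟩)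

lemma exists_child_subtreeDom_infinite {α : List ℕ} {k : ℕ}
    (hk : ∀ i, (t.label (α ++ [i])).isSome → i < k) (h : (t.subtreeDom α).Infinite) :
    ∃ i, (t.subtreeDom (α ++ [i])).Infinite := by
  by_contra! hfin
  refine h (Set.Finite.subset ?_ (t.subtreeDom_subset_insert_biUnion α k hk))
  exact ((Set.finite_Iio k).biUnion fun i _ => (hfin i).image _).insert []

end OTree

namespace IsTreeIn

variable {L : Type} {Rules : Set (List L × L)} {t : OTree L}

lemma exists_children_bound (ht : IsTreeIn Rules t) {α : List ℕ} (hα : (t.label α).isSome) :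
    ∃ k, ∀ i, (t.label (α ++ [i])).isSome → i < k := by
  obtain ⟨l, hl⟩ := Option.isSome_iff_exists.mp hα
  obtain ⟨ps, hchildren, -⟩ := ht α l hl
  refine ⟨ps.length, fun i hi => ?_⟩
  rw [hchildren i] at hi
  simpa using hi

lemma exists_subtreeDom_infinite_of_length (ht : IsTreeIn Rules t) (hinf : ¬ TreeFinite t) :
    ∀ n, ∃ α : List ℕ, α.length = n ∧ (t.subtreeDom α).Infinite
  | 0 => ⟨[], rfl, by simpa [OTree.subtreeDom, TreeFinite] using hinf⟩
  | n + 1 => by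
    obtain ⟨α, hlen, hα⟩ := exists_subtreeDom_infinite_of_length ht hinf n
    obtain ⟨k, hk⟩ := ht.exists_children_bound (t.isSome_of_subtreeDom_infinite hα)
    obtain ⟨i, hi⟩ := t.exists_child_subtreeDom_infinite hk hα
    exact ⟨α ++ [i], by simp [hlen], hi⟩

end IsTreeIn

theorem wf_infinite_has_incomplete_at_every_depth {C R : Type}
    (Rules : Set (List (C × R) × (C × R))) (t : OTree (Judg C R))
    (hpet : IsPET Rules t) (hwf : WellFormed t) (hinf : ¬ TreeFinite t) :
    ∀ n : ℕ, ∃ (α : List ℕ) (c : C), α.length = n ∧ t.label α = some (c, none) := by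
  intro n
  obtain ⟨α, hlen, hα⟩ := IsTreeIn.exists_subtreeDom_infinite_of_length hpet hinf n
  obtain ⟨⟨c, u⟩, hlabel⟩ := Option.isSome_iff_exists.mp (t.isSome_of_subtreeDom_infinite hα)
  refine ⟨α, c, hlen, ?_⟩
  cases u with
  | none => exact hlabel
  | some r => exact absurd (hwf α c r hlabel) hα
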